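/- Let p be an orthogonal partition of 2n+1, with p_1 and n* as defined. Then [p_1 p_1 (2n*)]^{Sp_{2n}} ≤ ((p^t)^-)_{Sp_{2n}} in the dominance order on partitions of 2n. (Proposition 4.4 of the paper for G_n = Sp_{2n}, where η_{so_{2n+1},sp_{2n}}(p) = ((p^t)^-)_{Sp_{2n}}.) -/

import Mathlib

/-!  Basic combinatorics of partitions: transpose, dominance order,
symplectic/orthogonal partitions, collapses and expansions, and the
dimension formulas for nilpotent orbits. -/

/-- `p` is a partition of `N`: a multiset of positive integers summing to `N`. -/
def IsPartitionOf (N : ℕ) (p : Multiset ℕ) : Prop := p.sum = N ∧ 0 ∉ p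

/-- Sum of the `k` largest parts of `p`:
`Σ_{j ≥ 1} min k #{i : p_i ≥ j}`. -/
def psum (p : Multiset ℕ) (k : ℕ) : ℕ :=
  ((Multiset.range p.sum).map (fun j => min k (p.countP (fun a => j + 1 ≤ a)))).sum

/-- Dominance order on partitions: `DomLE p q` means `p ≤ q`, i.e. for every `k`
the sum of the `k` largest parts of `p` is at most that of `q`. -/
def DomLE (p q : Multiset ℕ) : Prop := ∀ k, psum p k ≤ psum q k

/-- The transpose of a partition: its `j`-th part is `#{i : p_i ≥ j}`. -/
def transpose (p : Multiset ℕ) : Multiset ℕ :=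
  (((Multiset.range p.sum).map (fun j => p.countP (fun a => j + 1 ≤ a))).filter (0 < ·))

/-- A partition is symplectic if every odd part occurs with even multiplicity. -/
def IsSymplectic (p : Multiset ℕ) : Prop := ∀ a, Odd a → Even (p.count a)

/-- A partition is orthogonal if every even part occurs with even multiplicity. -/
def IsOrthogonal (p : Multiset ℕ) : Prop := ∀ a, Even a → Even (p.count a)

/-- `q` is the `P`-collapse of `p` (as partitions of `N`): the largest partition of `N`
satisfying `P` which is `≤ p` in the dominance order. -/
def IsCollapseOf (P : Multiset ℕ → Prop) (N : ℕ) (p q : Multiset ℕ) : Prop :=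
  IsPartitionOf N q ∧ P q ∧ DomLE q p ∧
    ∀ q', IsPartitionOf N q' → P q' → DomLE q' p → DomLE q' q

open Classical in
noncomputable def collapseOf (P : Multiset ℕ → Prop) (N : ℕ) (p : Multiset ℕ) : Multiset ℕ :=
  if h : ∃ q, IsCollapseOf P N p q then h.choose else 0

/-- The symplectic collapse `p_{Sp_N}` of a partition `p` of `N` (`N` even). -/
noncomputable def sympCollapse (N : ℕ) (p : Multiset ℕ) : Multiset ℕ :=
  collapseOf IsSymplectic N p

/-- The orthogonal collapse `p_{SO_N}` of a partition `p` of `N`. -/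
noncomputable def orthCollapse (N : ℕ) (p : Multiset ℕ) : Multiset ℕ :=
  collapseOf IsOrthogonal N p

/-- A symplectic partition `p` of `N` is special if `(((p^t)_{Sp_N})^t)_{Sp_N} = p`. -/
def IsSpecialSymp (N : ℕ) (p : Multiset ℕ) : Prop :=
  sympCollapse N (transpose (sympCollapse N (transpose p))) = p

/-- An orthogonal partition `p` of `N` is special if `(((p^t)_{SO_N})^t)_{SO_N} = p`. -/
def IsSpecialOrth (N : ℕ) (p : Multiset ℕ) : Prop :=
  orthCollapse N (transpose (orthCollapse N (transpose p))) = p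

/-- `q` is the `(P, Sp)`-expansion of `p`: the smallest partition of `N` satisfying
`P` and the speciality predicate `Sp` which is `≥ p` in the dominance order. -/
def IsExpansionOf (P Sp : Multiset ℕ → Prop) (N : ℕ) (p q : Multiset ℕ) : Prop :=
  IsPartitionOf N q ∧ P q ∧ Sp q ∧ DomLE p q ∧
    ∀ q', IsPartitionOf N q' → P q' → Sp q' → DomLE p q' → DomLE q q'

open Classical in
noncomputable def expansionOf (P Sp : Multiset ℕ → Prop) (N : ℕ) (p : Multiset ℕ) :
    Multiset ℕ :=
  if h : ∃ q, IsExpansionOf P Sp N p q then h.choose else 0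

/-- The symplectic expansion `p^{Sp_N}`: the smallest special symplectic partition of `N`
which is `≥ p` in the dominance order. -/
noncomputable def sympExpansion (N : ℕ) (p : Multiset ℕ) : Multiset ℕ :=
  expansionOf IsSymplectic (IsSpecialSymp N) N p

/-- The orthogonal expansion `p^{SO_N}`: the smallest special orthogonal partition of `N`
which is `≥ p` in the dominance order. -/
noncomputable def orthExpansion (N : ℕ) (p : Multiset ℕ) : Multiset ℕ :=
  expansionOf IsOrthogonal (IsSpecialOrth N) N p

/-- The smallest part of a (nonempty) partition. -/
def minPart (p : Multiset ℕ) : ℕ := p.sum - psum p (Multiset.card p - 1)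

/-- The largest part of a partition. -/
def maxPart (p : Multiset ℕ) : ℕ := psum p 1

/-- `p^-`: decrease the smallest part of `p` by `1` (deleting it if it becomes `0`). -/
def pMinus (p : Multiset ℕ) : Multiset ℕ :=
  ((minPart p - 1) ::ₘ p.erase (minPart p)).filter (0 < ·)

/-- `p^+`: increase the largest part of `p` by `1`. -/
def pPlus (p : Multiset ℕ) : Multiset ℕ :=
  (maxPart p + 1) ::ₘ p.erase (maxPart p)

/-- `dim_{sp_{2n}}(p) = 2n² + n − ½(Σ_i ((p^t)_i)² + #{i : p_i odd})`,
the dimension of the nilpotent orbit of `sp_{2n}` attached to a symplectic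
partition `p` of `2n`. -/
def dimSp (n : ℕ) (p : Multiset ℕ) : ℚ :=
  (2 * (n : ℚ) ^ 2 + n) -
    (((transpose p).map (fun x => (x : ℚ) ^ 2)).sum + (p.countP (Odd ·) : ℚ)) / 2

/-- `dim_{so_m}(p) = m(m−1)/2 − ½(Σ_i ((p^t)_i)² − #{i : p_i odd})`,
the dimension of the nilpotent orbit of `so_m` attached to an orthogonal
partition `p` of `m`. -/
def dimSO (m : ℕ) (p : Multiset ℕ) : ℚ :=
  ((m : ℚ) * ((m : ℚ) - 1)) / 2 -
    (((transpose p).map (fun x => (x : ℚ) ^ 2)).sum - (p.countP (Odd ·) : ℚ)) / 2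

/-- The partition `p_1 = [⌊b_1/2⌋^{a_1} ⋯ ⌊b_r/2⌋^{a_r}]^t` attached to
`p = [b_1^{a_1} ⋯ b_r^{a_r}]` (zero entries discarded). -/
def pOne (p : Multiset ℕ) : Multiset ℕ := transpose (p.map (· / 2))

/-- `n* = ⌊(Σ_{i : b_i odd} a_i)/2⌋`, i.e. half the number of odd parts. -/
def nStar (p : Multiset ℕ) : ℕ := p.countP (Odd ·) / 2

/-- `[q q (m)]`: two copies of `q` together with one extra part `m`
(no extra part when `m = 0`). -/
def qqm (q : Multiset ℕ) (m : ℕ) : Multiset ℕ :=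
  if m = 0 then q + q else m ::ₘ (q + q)

/-!
Let `y = (p^t)^-`, a partition of `2n`. Its symplectic collapse `c` can be written down: the
partial sums of `c` are those of `y`, lowered by one exactly where the partial sum is odd without
lying inside a run of equal odd rows. As `p` is orthogonal of odd size, the partial sums of `p^t`
at odd positions are odd, so every odd partial sum of `y` at an even position follows an odd one;
hence `c` has even partial sums at all even positions, which makes `c^t` symplectic and `c`
special. On the other hand `x = [p₁ p₁ (2n*)]` is symplectic and `x ≤ y`, comparing partial sums
part by part of `p`; so `x ≤ c` by maximality of the collapse, and `x^{Sp} ≤ c` by minimality of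
the expansion.
-/

lemma Multiset.sum_le_sum_of_le {s t : Multiset ℕ} (h : s ≤ t) : s.sum ≤ t.sum := by
  obtain ⟨u, rfl⟩ := Multiset.le_iff_exists_add.1 h
  simp

/-! In the Young diagram of `p`, column `j` and row `i` (both `0`-indexed) have lengths
`colLen p j` and `rowLen p i`. -/

def colLen (p : Multiset ℕ) (j : ℕ) : ℕ := p.countP (fun a => j + 1 ≤ a)

/-- The `(i+1)`-st largest part of `p`, or `0` if `p` has at most `i` parts. -/
def rowLen (p : Multiset ℕ) (i : ℕ) : ℕ :=
  ((Finset.range p.sum).filter (fun j => i + 1 ≤ colLen p j)).card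

lemma colLen_anti (p : Multiset ℕ) : Antitone (colLen p) := fun j j' h => by
  simp only [colLen, Multiset.countP_eq_card_filter]
  exact Multiset.card_le_card (Multiset.monotone_filter_right p fun a (ha : j' + 1 ≤ a) => by omega)

lemma colLen_le_card (p : Multiset ℕ) (j : ℕ) : colLen p j ≤ Multiset.card p :=
  Multiset.countP_le_card _ _

lemma colLen_zero {p : Multiset ℕ} (h0 : 0 ∉ p) : colLen p 0 = Multiset.card p :=
  Multiset.countP_eq_card.2 fun _ ha => Nat.pos_of_ne_zero fun h => h0 (h ▸ ha)

lemma colLen_eq_zero {p : Multiset ℕ} {j : ℕ} (h : p.sum ≤ j) : colLen p j = 0 :=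
  Multiset.countP_eq_zero.2 fun a ha hja => by have := Multiset.le_sum_of_mem ha; omega

lemma colLen_le_sum (p : Multiset ℕ) (j : ℕ) : colLen p j ≤ p.sum := by
  induction p using Multiset.induction with
  | empty => simp [colLen]
  | cons a s ih =>
    simp only [colLen, Multiset.countP_cons, Multiset.sum_cons] at *
    split_ifs <;> omega

lemma colLen_eq_count_add (p : Multiset ℕ) (j : ℕ) :
    colLen p j = p.count (j + 1) + colLen p (j + 1) := by
  induction p using Multiset.induction with
  | empty => simp [colLen]
  | cons a s ih =>
    simp only [colLen, Multiset.countP_cons, Multiset.count_cons] at *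
    split_ifs <;> omega

lemma lt_card_filter_range_iff {P : ℕ → Prop} [DecidablePred P] {n j : ℕ}
    (hdown : ∀ a b, a ≤ b → P b → P a) (hn : ∀ a, P a → a < n) :
    j < ((Finset.range n).filter P).card ↔ P j := by
  constructor
  · intro h
    by_contra hPj
    have hsub : (Finset.range n).filter P ⊆ Finset.range j := fun a ha => by
      simp only [Finset.mem_filter, Finset.mem_range] at ha ⊢
      by_contra hja
      exact hPj (hdown j a (by omega) ha.2)
    have := Finset.card_le_card hsub
    simp only [Finset.card_range] at this
    omega
  · intro h
    have hsub : Finset.range (j + 1) ⊆ (Finset.range n).filter P := fun a ha => by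
      simp only [Finset.mem_range] at ha
      have hPa : P a := hdown a j (by omega) h
      simpa using ⟨hn a hPa, hPa⟩
    simpa using Finset.card_le_card hsub

lemma card_filter_range_lt (c B : ℕ) :
    ((Finset.range B).filter (fun i => i + 1 ≤ c)).card = min B c := by
  rw [show (Finset.range B).filter (fun i => i + 1 ≤ c) = Finset.range (min B c) by
    ext i; simp only [Finset.mem_filter, Finset.mem_range, lt_min_iff]; omega,
    Finset.card_range]

lemma lt_colLen_iff (p : Multiset ℕ) (i j : ℕ) : i < colLen p j ↔ j < rowLen p i :=
  (lt_card_filter_range_iff (P := fun j => i + 1 ≤ colLen p j)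
    (fun _ _ hab hPb => le_trans hPb (colLen_anti p hab))
    (fun a hPa => by
      by_contra h
      rw [colLen_eq_zero (by omega)] at hPa
      omega)).symm

lemma rowLen_anti (p : Multiset ℕ) : Antitone (rowLen p) := fun _ _ h =>
  Finset.card_le_card fun j hj => by
    simp only [Finset.mem_filter, Finset.mem_range] at hj ⊢
    exact ⟨hj.1, by omega⟩

lemma rowLen_eq_zero {p : Multiset ℕ} {i : ℕ} (h : Multiset.card p ≤ i) : rowLen p i = 0 := by
  rw [rowLen, Finset.card_eq_zero, Finset.filter_eq_empty_iff]
  intro j _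
  have := colLen_le_card p j
  omega

lemma rowLen_pos {p : Multiset ℕ} (h0 : 0 ∉ p) {i : ℕ} (h : i < Multiset.card p) :
    0 < rowLen p i :=
  (lt_colLen_iff p i 0).mp (by rw [colLen_zero h0]; exact h)

lemma rowLen_eq_of_colLen {p : Multiset ℕ} {v i : ℕ} (hv : 0 < v)
    (h1 : colLen p v ≤ i) (h2 : i < colLen p (v - 1)) : rowLen p i = v := by
  have := (lt_colLen_iff p i (v - 1)).mp h2
  have : ¬ v < rowLen p i := fun h => by have := (lt_colLen_iff p i v).mpr h; omega
  omega

lemma le_rowLen_zero {p : Multiset ℕ} {a : ℕ} (ha : a ∈ p) : a ≤ rowLen p 0 := by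
  rcases Nat.eq_zero_or_pos a with rfl | ha0
  · exact Nat.zero_le _
  · have := (lt_colLen_iff p 0 (a - 1)).mp
      (Multiset.countP_pos_of_mem ha (show a - 1 + 1 ≤ a by omega))
    omega

lemma psum_eq_sum_colLen (p : Multiset ℕ) (k B : ℕ) (hB : p.sum ≤ B) :
    psum p k = ∑ j ∈ Finset.range B, min k (colLen p j) := by
  refine Finset.sum_subset (Finset.range_subset_range.2 hB) fun j _ hj => ?_
  simp only [Finset.mem_range, not_lt] at hj
  change min k (colLen p j) = 0
  rw [colLen_eq_zero hj, min_zero]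

lemma psum_eq_sum_rowLen (p : Multiset ℕ) (k : ℕ) :
    psum p k = ∑ i ∈ Finset.range k, rowLen p i := by
  have h : ∀ j, min k (colLen p j) =
      ∑ i ∈ Finset.range k, if i + 1 ≤ colLen p j then 1 else 0 := fun j => by
    rw [← Finset.card_filter, card_filter_range_lt]
  rw [psum_eq_sum_colLen p k _ le_rfl, Finset.sum_congr rfl fun j _ => h j, Finset.sum_comm]
  exact Finset.sum_congr rfl fun i _ => by rw [rowLen, Finset.card_filter]

@[simp]
lemma psum_zero (p : Multiset ℕ) : psum p 0 = 0 := by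
  simp [psum_eq_sum_rowLen]

lemma psum_succ (p : Multiset ℕ) (k : ℕ) : psum p (k + 1) = psum p k + rowLen p k := by
  rw [psum_eq_sum_rowLen, psum_eq_sum_rowLen, Finset.sum_range_succ]

lemma psum_mono (p : Multiset ℕ) : Monotone (psum p) := fun _ _ h => by
  rw [psum_eq_sum_rowLen, psum_eq_sum_rowLen]
  exact Finset.sum_le_sum_of_subset (Finset.range_subset_range.2 h)

lemma sum_range_colLen (p : Multiset ℕ) (k : ℕ) :
    ∑ j ∈ Finset.range k, colLen p j = (p.map (fun a => min a k)).sum := by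
  induction p using Multiset.induction with
  | empty => simp [colLen]
  | cons a s ih =>
    simp only [colLen, Multiset.countP_cons, Multiset.map_cons, Multiset.sum_cons] at ih ⊢
    rw [Finset.sum_add_distrib, ih, ← Finset.card_filter, card_filter_range_lt]
    omega

lemma sum_range_colLen_of_sum_le (p : Multiset ℕ) {B : ℕ} (hB : p.sum ≤ B) :
    ∑ j ∈ Finset.range B, colLen p j = p.sum := by
  rw [sum_range_colLen, Multiset.map_congr rfl fun a ha =>
    min_eq_left ((Multiset.le_sum_of_mem ha).trans hB), Multiset.map_id']

lemma psum_of_card_le (p : Multiset ℕ) {k : ℕ} (h : Multiset.card p ≤ k) : psum p k = p.sum := by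
  rw [psum_eq_sum_colLen p k _ le_rfl]
  exact (Finset.sum_congr rfl fun j _ => min_eq_right ((colLen_le_card p j).trans h)).trans
    (sum_range_colLen_of_sum_le p le_rfl)

lemma psum_of_rowLen_eq_zero (p : Multiset ℕ) {k : ℕ} (h : rowLen p k = 0) :
    psum p k = p.sum := by
  rcases le_total (Multiset.card p) k with hk | hk
  · exact psum_of_card_le p hk
  · rw [← psum_of_card_le p le_rfl, psum_eq_sum_rowLen, psum_eq_sum_rowLen,
      ← Finset.sum_range_add_sum_Ico _ hk, Finset.sum_eq_zero (s := Finset.Ico k _), add_zero]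
    intro i hi
    have := rowLen_anti p (Finset.mem_Ico.1 hi).1
    omega

lemma psum_add_mul_of_rowLen_eq (p : Multiset ℕ) {v a b : ℕ} (hab : a ≤ b)
    (hc : ∀ i, a ≤ i → i < b → rowLen p i = v) :
    psum p b = psum p a + (b - a) * v := by
  induction b, hab using Nat.le_induction with
  | base => simp
  | succ b hab ih =>
    rw [psum_succ, ih fun i h1 h2 => hc i h1 (by omega), hc b hab (by omega),
      show b + 1 - a = (b - a) + 1 by omega, Nat.succ_mul]
    ring

lemma sum_filter_lt (p : Multiset ℕ) (v : ℕ) :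
    (p.filter (fun a => v < a)).sum = psum p (colLen p v) := by
  have hsum : (p.filter (fun a => v < a)).sum ≤ p.sum :=
    Multiset.sum_le_sum_of_le (Multiset.filter_le _ p)
  rw [← sum_range_colLen_of_sum_le _ hsum, psum_eq_sum_colLen p _ _ le_rfl]
  refine Finset.sum_congr rfl fun j _ => ?_
  have hcol : colLen (p.filter (fun a => v < a)) j = colLen p (max j v) := by
    simp only [colLen, Multiset.countP_filter]
    exact Multiset.countP_congr rfl fun a _ => propext (by omega)
  rcases le_total v j with h | h
  · rw [hcol, max_eq_left h, min_eq_right (colLen_anti p h)]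
  · rw [hcol, max_eq_right h, min_eq_left (colLen_anti p h)]

lemma sum_filter_pos (m : Multiset ℕ) : (m.filter (0 < ·)).sum = m.sum := by
  induction m using Multiset.induction with
  | empty => simp
  | cons a s ih => rcases Nat.eq_zero_or_pos a with rfl | h <;> simp [*]

lemma colLen_filter_pos (m : Multiset ℕ) (j : ℕ) : colLen (m.filter (0 < ·)) j = colLen m j := by
  simp only [colLen, Multiset.countP_filter]
  exact Multiset.countP_congr rfl fun a _ => propext (by omega)

lemma zero_notMem_transpose (p : Multiset ℕ) : 0 ∉ transpose p := fun h => by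
  have := Multiset.of_mem_filter h
  omega

lemma sum_transpose (p : Multiset ℕ) : (transpose p).sum = p.sum := by
  rw [transpose, sum_filter_pos]
  exact sum_range_colLen_of_sum_le p le_rfl

lemma transpose_ne_zero {p : Multiset ℕ} (h : Odd p.sum) : transpose p ≠ 0 := fun h' => by
  rw [← sum_transpose, h', Multiset.sum_zero] at h
  exact Nat.not_odd_zero h

lemma colLen_transpose (p : Multiset ℕ) (i : ℕ) : colLen (transpose p) i = rowLen p i := by
  rw [transpose, colLen_filter_pos, colLen, Multiset.countP_map, rowLen,
    ← Multiset.countP_eq_card_filter, Multiset.countP_eq_card_filter]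
  rfl

lemma rowLen_transpose (p : Multiset ℕ) (i : ℕ) : rowLen (transpose p) i = colLen p i := by
  have : (Finset.range p.sum).filter (fun j => i + 1 ≤ colLen (transpose p) j) =
      (Finset.range p.sum).filter (fun j => j + 1 ≤ colLen p i) :=
    Finset.filter_congr fun j _ => by rw [colLen_transpose]; exact (lt_colLen_iff p j i).symm
  rw [rowLen, sum_transpose, this, card_filter_range_lt]
  exact min_eq_right (colLen_le_sum p i)

lemma count_transpose (p : Multiset ℕ) (j : ℕ) :
    (transpose p).count (j + 1) = rowLen p j - rowLen p (j + 1) := by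
  have h := colLen_eq_count_add (transpose p) j
  rw [colLen_transpose, colLen_transpose] at h
  omega

lemma transpose_transpose {p : Multiset ℕ} (h0 : 0 ∉ p) : transpose (transpose p) = p := by
  ext a
  rcases Nat.eq_zero_or_pos a with rfl | ha
  · rw [Multiset.count_eq_zero_of_notMem (zero_notMem_transpose _),
      Multiset.count_eq_zero_of_notMem h0]
  · obtain ⟨j, rfl⟩ : ∃ j, a = j + 1 := ⟨a - 1, by omega⟩
    rw [count_transpose, rowLen_transpose, rowLen_transpose, colLen_eq_count_add p j]
    omega

lemma psum_transpose (p : Multiset ℕ) (k : ℕ) :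
    psum (transpose p) k = (p.map (fun a => min a k)).sum := by
  rw [psum_eq_sum_rowLen, ← sum_range_colLen]
  exact Finset.sum_congr rfl fun i _ => rowLen_transpose p i

def ofRows (g : ℕ → ℕ) (L : ℕ) : Multiset ℕ :=
  ((Multiset.range L).map g).filter (0 < ·)

lemma zero_notMem_ofRows (g : ℕ → ℕ) (L : ℕ) : 0 ∉ ofRows g L := fun h => by
  have := Multiset.of_mem_filter h
  omega

lemma card_ofRows_le (g : ℕ → ℕ) (L : ℕ) : Multiset.card (ofRows g L) ≤ L :=
  (Multiset.card_le_card (Multiset.filter_le _ _)).trans (by simp)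

lemma rowLen_ofRows {g : ℕ → ℕ} {L : ℕ} (hg : Antitone g) (hL : ∀ i, L ≤ i → g i = 0)
    (i : ℕ) : rowLen (ofRows g L) i = g i := by
  have hcol : ∀ j, colLen (ofRows g L) j = ((Finset.range L).filter (fun i => j + 1 ≤ g i)).card :=
    fun j => by
      rw [ofRows, colLen_filter_pos, colLen, Multiset.countP_map,
        ← Multiset.countP_eq_card_filter, Multiset.countP_eq_card_filter]
      rfl
  have hgi : g i ≤ (ofRows g L).sum := by
    rcases Nat.lt_or_ge i L with h | h
    · rw [ofRows, sum_filter_pos]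
      exact Multiset.le_sum_of_mem (Multiset.mem_map_of_mem g (Multiset.mem_range.2 h))
    · rw [hL i h]
      exact Nat.zero_le _
  have : (Finset.range (ofRows g L).sum).filter (fun j => i + 1 ≤ colLen (ofRows g L) j) =
      (Finset.range (ofRows g L).sum).filter (fun j => j + 1 ≤ g i) :=
    Finset.filter_congr fun j _ => by
      rw [hcol]
      exact lt_card_filter_range_iff (P := fun i' => j + 1 ≤ g i')
        (fun a b hab hPb => le_trans hPb (hg hab))
        (fun a hPa => by by_contra hc; rw [hL a (by omega)] at hPa; omega)
  rw [rowLen, this, card_filter_range_lt]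
  exact min_eq_right hgi

/-! Largest parts of sums of partitions -/

lemma exists_le_card_le_sum_eq_psum {m : Multiset ℕ} (h0 : 0 ∉ m) (k : ℕ) :
    ∃ s ≤ m, Multiset.card s ≤ k ∧ s.sum = psum m k := by
  rcases le_or_gt (Multiset.card m) k with hk | hk
  · exact ⟨m, le_rfl, hk, (psum_of_card_le m hk).symm⟩
  set v := rowLen m k
  have hv : 0 < v := rowLen_pos h0 hk
  set K := colLen m v
  have hKk : K ≤ k := not_lt.1 fun h => by have := (lt_colLen_iff m k v).mp h; omega
  have hk' : k < colLen m (v - 1) := (lt_colLen_iff m k (v - 1)).mpr (by omega)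
  have hcount : colLen m (v - 1) = m.count v + K := by
    rw [colLen_eq_count_add, Nat.sub_add_cancel hv]
  refine ⟨m.filter (v < ·) + Multiset.replicate (k - K) v, ?_, ?_, ?_⟩
  · calc _ ≤ m.filter (v < ·) + m.filter (¬ v < ·) := by
          refine add_le_add_right
            ((Multiset.le_count_iff_replicate_le (s := m.filter (¬ v < ·))).1 ?_) _
          rw [Multiset.count_filter_of_pos (p := fun x => ¬ v < x) (lt_irrefl v)]
          omega
      _ = m := Multiset.filter_add_not _ _
  · rw [Multiset.card_add, Multiset.card_replicate, ← Multiset.countP_eq_card_filter]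
    change K + (k - K) ≤ k
    omega
  · rw [Multiset.sum_add, Multiset.sum_replicate, smul_eq_mul, sum_filter_lt,
      psum_add_mul_of_rowLen_eq m hKk fun i hi hik => rowLen_eq_of_colLen hv hi (by omega)]

lemma Multiset.exists_eq_add_of_le_add {s u w : Multiset ℕ} (h : s ≤ u + w) :
    ∃ s₁ ≤ u, ∃ s₂ ≤ w, s = s₁ + s₂ := by
  refine ⟨s ∩ u, Multiset.inter_le_right, s - s ∩ u, ?_, ?_⟩
  · rw [Multiset.le_iff_count]
    intro a
    have := Multiset.le_iff_count.1 h a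
    rw [Multiset.count_add] at this
    rw [Multiset.count_sub, Multiset.count_inter]
    omega
  · rw [add_tsub_cancel_of_le Multiset.inter_le_left]

lemma psum_le_psum_of_le {s m : Multiset ℕ} (h : s ≤ m) (k : ℕ) : psum s k ≤ psum m k := by
  rw [psum_eq_sum_colLen s k m.sum (Multiset.sum_le_sum_of_le h),
    psum_eq_sum_colLen m k m.sum le_rfl]
  exact Finset.sum_le_sum fun j _ => min_le_min_left k (Multiset.countP_le_of_le _ h)

lemma sum_le_psum {s m : Multiset ℕ} (h : s ≤ m) {k : ℕ} (hk : Multiset.card s ≤ k) :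
    s.sum ≤ psum m k :=
  psum_of_card_le s hk ▸ psum_le_psum_of_le h k

lemma exists_psum_add_le {u w : Multiset ℕ} (h0 : 0 ∉ u + w) (k : ℕ) :
    ∃ a b, a + b ≤ k ∧ psum (u + w) k ≤ psum u a + psum w b := by
  obtain ⟨s, hs, hcard, hsum⟩ := exists_le_card_le_sum_eq_psum h0 k
  obtain ⟨s₁, h₁, s₂, h₂, rfl⟩ := Multiset.exists_eq_add_of_le_add hs
  refine ⟨Multiset.card s₁, Multiset.card s₂, by simpa using hcard, ?_⟩
  rw [← hsum, Multiset.sum_add]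
  exact add_le_add (sum_le_psum h₁ le_rfl) (sum_le_psum h₂ le_rfl)

/-- Partial sums are concave: `psum u (a + d) - psum u a` decreases in `a`. -/
lemma psum_add_add_le (u : Multiset ℕ) {a b : ℕ} (hab : a ≤ b) (d : ℕ) :
    psum u (b + d) + psum u a ≤ psum u (a + d) + psum u b := by
  induction d with
  | zero => simp only [add_zero]; omega
  | succ d ih =>
    rw [← add_assoc, ← add_assoc, psum_succ, psum_succ]
    have := rowLen_anti u (show a + d ≤ b + d by omega)
    omega

lemma psum_add_psum_le (u : Multiset ℕ) (k₁ k₂ : ℕ) :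
    psum u k₁ + psum u k₂ ≤ psum u ((k₁ + k₂ + 1) / 2) + psum u ((k₁ + k₂) / 2) := by
  wlog h : k₂ ≤ k₁ generalizing k₁ k₂
  · have := this k₂ k₁ (by omega)
    rw [add_comm k₂ k₁] at this
    omega
  have := psum_add_add_le u (show k₂ ≤ (k₁ + k₂ + 1) / 2 by omega) (k₁ - (k₁ + k₂ + 1) / 2)
  rw [show (k₁ + k₂ + 1) / 2 + (k₁ - (k₁ + k₂ + 1) / 2) = k₁ by omega,
    show k₂ + (k₁ - (k₁ + k₂ + 1) / 2) = (k₁ + k₂) / 2 by omega] at this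
  omega

lemma psum_add_self_le {u : Multiset ℕ} (h0 : 0 ∉ u) (k : ℕ) :
    psum (u + u) k ≤ psum u ((k + 1) / 2) + psum u (k / 2) := by
  obtain ⟨a, b, hab, h⟩ := exists_psum_add_le (u := u) (w := u) (by simpa using h0) k
  have := psum_add_psum_le u a b
  have := psum_mono u (show (a + b + 1) / 2 ≤ (k + 1) / 2 by omega)
  have := psum_mono u (show (a + b) / 2 ≤ k / 2 by omega)
  omega

lemma psum_singleton_le (m a : ℕ) : psum {m} a ≤ min a 1 * m := by
  rcases Nat.eq_zero_or_pos a with rfl | ha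
  · simp
  · rw [psum_of_card_le _ (by simp; omega)]
    simp [show min a 1 = 1 by omega]

/-! Dominance order -/

lemma colLen_le_of_rowLen_le {p q : Multiset ℕ} (h : ∀ i, rowLen p i ≤ rowLen q i) (j : ℕ) :
    colLen p j ≤ colLen q j := by
  rcases Nat.eq_zero_or_pos (colLen p j) with h0 | h0
  · omega
  · have := (lt_colLen_iff q (colLen p j - 1) j).mpr
      (((lt_colLen_iff p _ j).mp (by omega)).trans_le (h _))
    omega

lemma DomLE.antisymm {p q : Multiset ℕ} (hp : 0 ∉ p) (hq : 0 ∉ q)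
    (h1 : DomLE p q) (h2 : DomLE q p) : p = q := by
  have hrow : ∀ i, rowLen p i = rowLen q i := fun i => by
    have := psum_succ p i
    have := psum_succ q i
    have := h1 i; have := h2 i; have := h1 (i + 1); have := h2 (i + 1)
    omega
  have hcol : ∀ j, colLen p j = colLen q j := fun j =>
    le_antisymm (colLen_le_of_rowLen_le (fun i => (hrow i).le) j)
      (colLen_le_of_rowLen_le (fun i => (hrow i).ge) j)
  ext a
  rcases Nat.eq_zero_or_pos a with rfl | ha
  · rw [Multiset.count_eq_zero_of_notMem hp, Multiset.count_eq_zero_of_notMem hq]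
  · obtain ⟨j, rfl⟩ : ∃ j, a = j + 1 := ⟨a - 1, by omega⟩
    have := colLen_eq_count_add p j
    have := colLen_eq_count_add q j
    have := hcol j
    have := hcol (j + 1)
    omega

lemma collapseOf_eq {P : Multiset ℕ → Prop} {N : ℕ} {p q : Multiset ℕ}
    (h : IsCollapseOf P N p q) : collapseOf P N p = q := by
  have hex : ∃ q, IsCollapseOf P N p q := ⟨q, h⟩
  have hc := hex.choose_spec
  rw [collapseOf, dif_pos hex]
  exact DomLE.antisymm hc.1.2 h.1.2 (h.2.2.2 _ hc.1 hc.2.1 hc.2.2.1)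
    (hc.2.2.2 _ h.1 h.2.1 h.2.2.1)

lemma collapseOf_self {P : Multiset ℕ → Prop} {N : ℕ} {p : Multiset ℕ}
    (hp : IsPartitionOf N p) (hP : P p) : collapseOf P N p = p :=
  collapseOf_eq ⟨hp, hP, fun _ => le_rfl, fun _ _ _ h => h⟩

/-- If no expansion exists, `expansionOf` is `0`, which lies below everything. -/
lemma expansionOf_domLE {P Sp : Multiset ℕ → Prop} {N : ℕ} {p q : Multiset ℕ}
    (hq : IsPartitionOf N q) (hP : P q) (hSp : Sp q) (hpq : DomLE p q) :
    DomLE (expansionOf P Sp N p) q := by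
  rw [expansionOf]
  split_ifs with hex
  · exact hex.choose_spec.2.2.2.2 q hq hP hSp hpq
  · exact fun _ => Nat.zero_le _

/-! Symplectic partitions -/

lemma Multiset.sum_mod_two (p : Multiset ℕ) : p.sum % 2 = p.countP (Odd ·) % 2 := by
  induction p using Multiset.induction with
  | empty => simp
  | cons a s ih =>
    rw [Multiset.sum_cons, Multiset.countP_cons]
    split_ifs with h <;> rw [Nat.odd_iff] at h <;> omega

lemma Multiset.even_card_of_forall_even_count {m : Multiset ℕ} (h : ∀ a, Even (m.count a)) :
    Even (Multiset.card m) := by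
  rw [← Multiset.toFinset_sum_count_eq]
  exact Finset.even_sum _ fun a _ => h a

lemma IsSymplectic.filter {q : Multiset ℕ} (hq : IsSymplectic q) (P : ℕ → Prop)
    [DecidablePred P] : IsSymplectic (q.filter P) := fun a ha => by
  rw [Multiset.count_filter]
  split_ifs
  exacts [hq a ha, Even.zero]

lemma IsSymplectic.even_sum {q : Multiset ℕ} (hq : IsSymplectic q) : Even q.sum := by
  have : Even (q.countP (Odd ·)) := by
    rw [Multiset.countP_eq_card_filter]
    exact Multiset.even_card_of_forall_even_count fun a => by
      rw [Multiset.count_filter]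
      split_ifs with ha
      exacts [hq a ha, Even.zero]
  rw [Nat.even_iff, Multiset.sum_mod_two, ← Nat.even_iff]
  exact this

lemma rowLen_colLen_le (p : Multiset ℕ) (v : ℕ) : rowLen p (colLen p v) ≤ v :=
  not_lt.1 fun h => lt_irrefl _ ((lt_colLen_iff p _ v).mpr h)

lemma lt_rowLen_colLen_sub_one (p : Multiset ℕ) {v : ℕ} (h : 0 < colLen p v) :
    v < rowLen p (colLen p v - 1) :=
  (lt_colLen_iff p _ v).mp (by omega)

lemma IsSymplectic.rowLen_eq_of_odd_psum {q : Multiset ℕ} (hq : IsSymplectic q) {k : ℕ}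
    (hodd : Odd (psum q (k + 1))) : rowLen q k = rowLen q (k + 1) ∧ Odd (rowLen q (k + 1)) := by
  set v := rowLen q k
  have hv : 0 < v := Nat.pos_of_ne_zero fun h => by
    have := rowLen_anti q (show k ≤ k + 1 by omega)
    rw [psum_of_rowLen_eq_zero q (by omega)] at hodd
    exact Nat.not_odd_iff_even.2 hq.even_sum hodd
  set K := colLen q v
  have hKk : K ≤ k := not_lt.1 fun h => by have := (lt_colLen_iff q k v).mp h; omega
  have hk : k < colLen q (v - 1) := (lt_colLen_iff q k (v - 1)).mpr (by omega)
  have hps := psum_add_mul_of_rowLen_eq q (v := v) (show K ≤ k + 1 by omega)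
    fun i hi hik => rowLen_eq_of_colLen hv hi (by omega)
  have hK : Even (psum q K) := by
    rw [← sum_filter_lt]
    exact (hq.filter _).even_sum
  generalize hMdef : (k + 1 - K) * v = M at hps
  have hM : Odd M := by
    obtain ⟨a, ha⟩ := hK
    obtain ⟨b, hb⟩ := hodd
    exact ⟨b - a, by omega⟩
  obtain ⟨hrun, hvodd⟩ := Nat.odd_mul.mp (hMdef ▸ hM)
  have hcount : colLen q (v - 1) = q.count v + K := by
    rw [colLen_eq_count_add, Nat.sub_add_cancel hv, add_comm]
  obtain ⟨c, hc⟩ := hq v hvodd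
  obtain ⟨r, hr⟩ := hrun
  have hnext := rowLen_eq_of_colLen hv (show K ≤ k + 1 by omega)
    (show k + 1 < colLen q (v - 1) by omega)
  exact ⟨hnext.symm, hnext ▸ hvodd⟩

lemma isSymplectic_of_rowLen_eq_of_odd_psum {q : Multiset ℕ}
    (H : ∀ k, Odd (psum q (k + 1)) → rowLen q k = rowLen q (k + 1)) : IsSymplectic q := by
  intro a ha
  by_contra hc
  have ha0 : 0 < a := ha.pos
  set K₁ := colLen q a with hK₁def
  set K₂ := colLen q (a - 1) with hK₂def
  have hK₂ : K₂ = q.count a + K₁ := by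
    rw [hK₂def, hK₁def, colLen_eq_count_add, Nat.sub_add_cancel ha0]
  have hca : 0 < q.count a := Nat.pos_of_ne_zero fun h => hc (h ▸ Even.zero)
  have hrun : ∀ i, K₁ ≤ i → i < K₂ → rowLen q i = a := fun i h1 h2 =>
    rowLen_eq_of_colLen ha0 h1 h2
  have hps := psum_add_mul_of_rowLen_eq q (show K₁ ≤ K₂ by omega) hrun
  have hK₁ : Even (psum q K₁) := by
    by_contra hodd
    obtain ⟨k, hk⟩ : ∃ k, K₁ = k + 1 :=
      Nat.exists_eq_add_one.2 (Nat.pos_of_ne_zero fun h => hodd (by simp [h]))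
    have h1 := H k (hk ▸ Nat.not_even_iff_odd.1 hodd)
    have h2 := lt_rowLen_colLen_sub_one q (v := a) (show 0 < K₁ by omega)
    rw [← hk, hrun K₁ le_rfl (by omega)] at h1
    rw [← hK₁def, hk, add_tsub_cancel_right] at h2
    omega
  obtain ⟨k, hk⟩ : ∃ k, K₂ = k + 1 := Nat.exists_eq_add_one.2 (by omega)
  have h1 := H k (by
    rw [← hk, hps, show K₂ - K₁ = q.count a by omega]
    exact hK₁.add_odd (Nat.not_even_iff_odd.1 hc |>.mul ha))
  have h2 := rowLen_colLen_le q (a - 1)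
  rw [hrun k (by omega) (by omega)] at h1
  rw [← hK₂def, hk] at h2
  omega

lemma isSymplectic_transpose_of_even_psum {c : Multiset ℕ}
    (h : ∀ k, Even k → Even (psum c k)) : IsSymplectic (transpose c) := by
  intro a ha
  obtain ⟨j, rfl⟩ : ∃ j, a = 2 * j + 1 := ha
  rw [count_transpose]
  have h₁ := h (2 * j) (even_two_mul j)
  have h₂ := h (2 * j + 2) (by rw [← mul_add_one]; exact even_two_mul _)
  rw [psum_succ, psum_succ] at h₂
  have := rowLen_anti c (show 2 * j ≤ 2 * j + 1 by omega)
  obtain ⟨a, ha⟩ := h₁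
  obtain ⟨b, hb⟩ := h₂
  exact ⟨b - a - rowLen c (2 * j + 1), by omega⟩

lemma isSpecialSymp_of_isSymplectic_transpose {N : ℕ} {c : Multiset ℕ} (hc : IsPartitionOf N c)
    (hsym : IsSymplectic c) (ht : IsSymplectic (transpose c)) : IsSpecialSymp N c := by
  have htc : IsPartitionOf N (transpose c) :=
    ⟨(sum_transpose c).trans hc.1, zero_notMem_transpose c⟩
  simp only [IsSpecialSymp, sympCollapse]
  rw [collapseOf_self htc ht, transpose_transpose hc.2, collapseOf_self hc hsym]

/-! The symplectic collapse, explicitly -/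

/-- The symplectic collapse of `y` lowers its `k`-th partial sum by `defect y k`. -/
def defect (y : Multiset ℕ) (k : ℕ) : ℕ :=
  if Odd (psum y k) ∧ ¬(rowLen y (k - 1) = rowLen y k ∧ Odd (rowLen y k)) then 1 else 0

def collapseRow (y : Multiset ℕ) (i : ℕ) : ℕ := rowLen y i + defect y i - defect y (i + 1)

def explicitCollapse (y : Multiset ℕ) : Multiset ℕ := ofRows (collapseRow y) (Multiset.card y)

section Collapse

variable (y : Multiset ℕ)

lemma defect_le_one (k : ℕ) : defect y k ≤ 1 := by
  unfold defect
  split_ifs <;> omega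

lemma defect_eq_one_iff (k : ℕ) :
    defect y k = 1 ↔ Odd (psum y k) ∧ ¬(rowLen y (k - 1) = rowLen y k ∧ Odd (rowLen y k)) := by
  unfold defect
  split_ifs with h
  exacts [iff_of_true rfl h, iff_of_false (by simp) h]

variable {y}

lemma defect_eq_zero {k : ℕ} (h : Even (psum y k)) : defect y k = 0 := by
  rw [defect, if_neg fun h' => Nat.not_odd_iff_even.2 h h'.1]

lemma defect_eq_zero_of_card_le (hev : Even y.sum) {k : ℕ} (h : Multiset.card y ≤ k) :
    defect y k = 0 :=
  defect_eq_zero (psum_of_card_le y h ▸ hev)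

lemma defect_eq_one {k : ℕ} (hodd : Odd (psum y k))
    (hev : Even (rowLen y (k - 1)) ∨ Even (rowLen y k)) : defect y k = 1 := by
  refine (defect_eq_one_iff y k).2 ⟨hodd, fun ⟨heq, hr⟩ => ?_⟩
  rcases hev with h | h
  · exact Nat.not_even_iff_odd.2 hr (heq ▸ h)
  · exact Nat.not_even_iff_odd.2 hr h

lemma defect_succ_le (k : ℕ) : defect y (k + 1) ≤ rowLen y k + defect y k := by
  have := defect_le_one y (k + 1)
  rcases Nat.eq_zero_or_pos (rowLen y k) with hr | hr
  · by_contra! h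
    have hd := (defect_eq_one_iff y (k + 1)).1 (by omega)
    rw [psum_succ, hr, add_zero] at hd
    have := defect_eq_one hd.1 (.inr (hr ▸ Even.zero))
    omega
  · omega

/-- The inequality behind `collapseRow y (i + 1) ≤ collapseRow y i`. -/
lemma rowLen_add_two_mul_defect_le (i : ℕ) :
    rowLen y (i + 1) + 2 * defect y (i + 1) ≤ rowLen y i + defect y i + defect y (i + 2) := by
  have hanti := rowLen_anti y (show i ≤ i + 1 by omega)
  have := defect_le_one y i
  have := defect_le_one y (i + 1)
  have := defect_le_one y (i + 2)
  rcases Nat.eq_zero_or_pos (defect y (i + 1)) with hd | hd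
  · omega
  obtain ⟨hodd, hrun⟩ := (defect_eq_one_iff y (i + 1)).1 (by omega)
  rw [add_tsub_cancel_right] at hrun
  have hps := psum_succ y i
  rcases le_or_gt (rowLen y i) (rowLen y (i + 1) + 1) with hclose | hfar
  swap
  · omega
  -- `rowLen y i` is `rowLen y (i + 1)` or `rowLen y (i + 1) + 1`; an odd partial sum next to an
  -- even row is a defect
  have hprev (h : Even (rowLen y i)) : defect y i = 1 :=
    defect_eq_one (by obtain ⟨a, ha⟩ := h; obtain ⟨b, hb⟩ := hodd; exact ⟨b - a, by omega⟩) (.inr h)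
  rcases Nat.even_or_odd (rowLen y (i + 1)) with he | ho
  · have hnext : defect y (i + 2) = 1 := defect_eq_one (k := i + 2)
      (by rw [psum_succ]; exact hodd.add_even he) (.inl he)
    rcases Nat.eq_or_lt_of_le hanti with heq | hlt
    · have := hprev (heq ▸ he)
      omega
    · omega
  · have hne : rowLen y i ≠ rowLen y (i + 1) := fun h => hrun ⟨h, ho⟩
    have := hprev (by obtain ⟨a, ha⟩ := ho; exact ⟨a + 1, by omega⟩)
    omega

lemma collapseRow_anti : Antitone (collapseRow y) := antitone_nat_of_succ_le fun i => by
  have := rowLen_add_two_mul_defect_le (y := y) i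
  have := defect_succ_le (y := y) i
  have := defect_succ_le (y := y) (i + 1)
  show rowLen y (i + 1) + defect y (i + 1) - defect y (i + 2) ≤
    rowLen y i + defect y i - defect y (i + 1)
  omega

variable (hev : Even y.sum)
include hev

lemma rowLen_explicitCollapse (i : ℕ) : rowLen (explicitCollapse y) i = collapseRow y i :=
  rowLen_ofRows collapseRow_anti (fun i hi => by
    rw [collapseRow, rowLen_eq_zero hi, defect_eq_zero_of_card_le hev hi,
      defect_eq_zero_of_card_le hev (by omega)]) i

lemma psum_explicitCollapse_add_defect (k : ℕ) :
    psum (explicitCollapse y) k + defect y k = psum y k := by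
  induction k with
  | zero => simp [defect_eq_zero]
  | succ k ih =>
    rw [psum_succ, psum_succ, rowLen_explicitCollapse hev, collapseRow]
    have := defect_succ_le (y := y) k
    omega

lemma isSymplectic_explicitCollapse : IsSymplectic (explicitCollapse y) := by
  refine isSymplectic_of_rowLen_eq_of_odd_psum fun k hodd => ?_
  have hps := psum_explicitCollapse_add_defect hev (k + 1)
  have hd : defect y (k + 1) = 0 := by
    by_contra hd
    have := defect_le_one y (k + 1)
    obtain ⟨⟨a, ha⟩, -⟩ := (defect_eq_one_iff y (k + 1)).1 (by omega)
    obtain ⟨b, hb⟩ := hodd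
    omega
  have hoddy : Odd (psum y (k + 1)) := by rw [← hps, hd, add_zero]; exact hodd
  obtain ⟨heq, hr⟩ : rowLen y k = rowLen y (k + 1) ∧ Odd (rowLen y (k + 1)) := by
    by_contra h
    have := (defect_eq_one_iff y (k + 1)).2 ⟨hoddy, h⟩
    omega
  have hd₀ : defect y k = 0 := defect_eq_zero (by
    have := psum_succ y k
    obtain ⟨a, ha⟩ := hoddy
    obtain ⟨b, hb⟩ := hr
    exact ⟨a - b, by omega⟩)
  have hd₂ : defect y (k + 2) = 0 := defect_eq_zero (by
    rw [psum_succ]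
    exact hoddy.add_odd hr)
  rw [rowLen_explicitCollapse hev, rowLen_explicitCollapse hev, collapseRow, collapseRow,
    hd, hd₀, hd₂, heq]

lemma sum_explicitCollapse : (explicitCollapse y).sum = y.sum := by
  have h := psum_explicitCollapse_add_defect hev (Multiset.card y)
  rwa [psum_of_card_le (explicitCollapse y) (card_ofRows_le _ _), psum_of_card_le y le_rfl,
    defect_eq_zero_of_card_le hev le_rfl, add_zero] at h

lemma le_explicitCollapse {q : Multiset ℕ} (hq : IsSymplectic q) (hqy : DomLE q y) :
    DomLE q (explicitCollapse y) := by
  intro k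
  have hps := psum_explicitCollapse_add_defect hev k
  have hk := hqy k
  by_contra! hlt
  have hd : defect y k = 1 := by have := defect_le_one y k; omega
  obtain ⟨hodd, hrun⟩ := (defect_eq_one_iff y k).1 hd
  obtain ⟨k, rfl⟩ : ∃ k', k = k' + 1 :=
    Nat.exists_eq_add_one.2 (Nat.pos_of_ne_zero fun h => by simp [h] at hodd)
  obtain ⟨hq₁, hq₂⟩ :=
    hq.rowLen_eq_of_odd_psum (show psum q (k + 1) = psum y (k + 1) by omega ▸ hodd)
  have := psum_succ q k
  have := psum_succ y k
  have : psum q (k + 2) = psum q (k + 1) + rowLen q (k + 1) := psum_succ q (k + 1)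
  have : psum y (k + 2) = psum y (k + 1) + rowLen y (k + 1) := psum_succ y (k + 1)
  have := hqy k
  have := hqy (k + 2)
  have := rowLen_anti y (show k ≤ k + 1 by omega)
  rw [add_tsub_cancel_right] at hrun
  exact hrun ⟨by omega, by rwa [show rowLen y (k + 1) = rowLen q (k + 1) by omega]⟩

lemma isCollapseOf_explicitCollapse : IsCollapseOf IsSymplectic y.sum y (explicitCollapse y) :=
  ⟨⟨sum_explicitCollapse hev, zero_notMem_ofRows _ _⟩, isSymplectic_explicitCollapse hev,
    fun k => by have := psum_explicitCollapse_add_defect hev k; omega,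
    fun _ _ hq hqy => le_explicitCollapse hev hq hqy⟩

lemma even_psum_explicitCollapse (h : ∀ k, Even k → Odd (psum y k) → Odd (psum y (k - 1))) {k : ℕ}
    (hk : Even k) : Even (psum (explicitCollapse y) k) := by
  have hps := psum_explicitCollapse_add_defect hev k
  rcases Nat.even_or_odd (psum y k) with he | ho
  · rw [defect_eq_zero he, add_zero] at hps
    rwa [hps]
  · have hprev := h k hk ho
    obtain ⟨k, rfl⟩ : ∃ k', k = k' + 1 :=
      Nat.exists_eq_add_one.2 (Nat.pos_of_ne_zero fun h => by simp [h] at ho)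
    rw [add_tsub_cancel_right] at hprev
    have hd := defect_eq_one (k := k + 1) ho (.inl (by
      rw [add_tsub_cancel_right]
      have := psum_succ y k
      obtain ⟨a, ha⟩ := ho
      obtain ⟨b, hb⟩ := hprev
      exact ⟨a - b, by omega⟩))
    obtain ⟨a, ha⟩ := ho
    exact ⟨a, by omega⟩

end Collapse

/-! Removing a box from the last row -/

section PMinus

variable {t : Multiset ℕ} (h0 : 0 ∉ t) (hne : t ≠ 0)

lemma minPart_eq_rowLen (hne : t ≠ 0) : minPart t = rowLen t (Multiset.card t - 1) := by
  have hl := Multiset.card_pos.2 hne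
  have := psum_succ t (Multiset.card t - 1)
  rw [Nat.sub_add_cancel hl, psum_of_card_le t le_rfl] at this
  rw [minPart]
  omega

include h0 hne

lemma minPart_pos : 0 < minPart t := by
  rw [minPart_eq_rowLen hne]
  exact rowLen_pos h0 (by have := Multiset.card_pos.2 hne; omega)

lemma colLen_minPart_sub_one : colLen t (minPart t - 1) = Multiset.card t := by
  have := (lt_colLen_iff t (Multiset.card t - 1) (minPart t - 1)).2
    (by rw [← minPart_eq_rowLen hne]; have := minPart_pos h0 hne; omega)
  have := colLen_le_card t (minPart t - 1)
  omega

lemma minPart_mem : minPart t ∈ t := by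
  have h1 := colLen_minPart_sub_one h0 hne
  have h2 : ¬ Multiset.card t - 1 < colLen t (minPart t) := fun h => by
    have := (lt_colLen_iff t _ _).1 h
    rw [← minPart_eq_rowLen hne] at this
    omega
  rw [colLen_eq_count_add, Nat.sub_add_cancel (minPart_pos h0 hne)] at h1
  have := Multiset.card_pos.2 hne
  rw [← Multiset.count_pos]
  omega

lemma colLen_pMinus (j : ℕ) :
    colLen (pMinus t) j + (if j + 1 = minPart t then 1 else 0) = colLen t j := by
  have h₁ : colLen (pMinus t) j =
      colLen (t.erase (minPart t)) j + if j + 1 ≤ minPart t - 1 then 1 else 0 := by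
    rw [pMinus, colLen_filter_pos]
    exact Multiset.countP_cons _ _ _
  have h₂ : colLen t j = colLen (t.erase (minPart t)) j + if j + 1 ≤ minPart t then 1 else 0 := by
    conv_lhs => rw [← Multiset.cons_erase (minPart_mem h0 hne)]
    exact Multiset.countP_cons _ _ _
  have := minPart_pos h0 hne
  rw [h₁, h₂]
  split_ifs <;> omega

lemma sum_pMinus : (pMinus t).sum + 1 = t.sum := by
  have := Multiset.sum_cons (minPart t) (t.erase (minPart t))
  rw [Multiset.cons_erase (minPart_mem h0 hne)] at this
  have := minPart_pos h0 hne
  rw [pMinus, sum_filter_pos, Multiset.sum_cons]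
  omega

lemma psum_pMinus (k : ℕ) :
    psum (pMinus t) k + (if Multiset.card t ≤ k then 1 else 0) = psum t k := by
  have hpos := minPart_pos h0 hne
  have hmp := Multiset.le_sum_of_mem (minPart_mem h0 hne)
  rw [psum_eq_sum_colLen (pMinus t) k t.sum (by have := sum_pMinus h0 hne; omega),
    psum_eq_sum_colLen t k t.sum le_rfl]
  have hj : ∀ j, min k (colLen t j) = min k (colLen (pMinus t) j)
      + if j = minPart t - 1 then (if Multiset.card t ≤ k then 1 else 0) else 0 := fun j => by
    have hcol := colLen_pMinus h0 hne j
    by_cases h₁ : j = minPart t - 1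
    · rw [if_pos (show j + 1 = minPart t by omega)] at hcol
      have := colLen_minPart_sub_one h0 hne
      rw [← h₁] at this
      rw [if_pos h₁]
      split_ifs <;> omega
    · rw [if_neg (show ¬ j + 1 = minPart t by omega)] at hcol
      rw [if_neg h₁]
      omega
  rw [Finset.sum_congr rfl fun j _ => hj j, Finset.sum_add_distrib, Finset.sum_ite_eq',
    if_pos (Finset.mem_range.2 (by omega))]

end PMinus

/-! Orthogonal partitions of odd size -/

section Orthogonal

variable {p : Multiset ℕ} (horth : IsOrthogonal p)
include horth

lemma IsOrthogonal.odd_card (hodd : Odd p.sum) : Odd (Multiset.card p) := by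
  have heven : Even (p.countP fun a => ¬ Odd a) := by
    rw [Multiset.countP_eq_card_filter]
    refine Multiset.even_card_of_forall_even_count fun a => ?_
    by_cases ha : Odd a
    · simp [ha]
    · have he := Nat.not_odd_iff_even.1 ha
      simpa [Multiset.count_filter, he] using horth a he
  rw [Multiset.card_eq_countP_add_countP (Odd ·)]
  rw [Nat.odd_iff, Multiset.sum_mod_two, ← Nat.odd_iff] at hodd
  exact hodd.add_even heven

lemma IsOrthogonal.colLen_mod_two (m : ℕ) :
    colLen p (2 * m + 1) % 2 = colLen p (2 * m + 2) % 2 := by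
  obtain ⟨c, hc⟩ := horth (2 * m + 2) ⟨m + 1, by ring⟩
  have : colLen p (2 * m + 1) = p.count (2 * m + 2) + colLen p (2 * m + 2) :=
    colLen_eq_count_add p (2 * m + 1)
  omega

lemma IsOrthogonal.odd_psum_transpose (h0 : 0 ∉ p) (hodd : Odd p.sum) (m : ℕ) :
    Odd (psum (transpose p) (2 * m + 1)) := by
  induction m with
  | zero =>
    rw [psum_succ, psum_zero, zero_add, rowLen_transpose, colLen_zero h0]
    exact horth.odd_card hodd
  | succ m ih =>
    have h₁ := psum_succ (transpose p) (2 * m + 1)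
    have h₂ : psum (transpose p) (2 * (m + 1) + 1) =
        psum (transpose p) (2 * m + 2) + rowLen (transpose p) (2 * m + 2) := psum_succ _ _
    rw [rowLen_transpose] at h₁ h₂
    have := horth.colLen_mod_two m
    rw [h₂, h₁]
    rw [Nat.odd_iff] at ih ⊢
    omega

end Orthogonal

/-- For `p` orthogonal of odd size, `(p^t)^-` has odd partial sums at all odd positions below
its length, and even ones from there on. -/
lemma odd_psum_pMinus_transpose_pred {p : Multiset ℕ} (hp0 : 0 ∉ p) (hodd : Odd p.sum)
    (horth : IsOrthogonal p) {k : ℕ} (hk : Even k) (hoddk : Odd (psum (pMinus (transpose p)) k)) :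
    Odd (psum (pMinus (transpose p)) (k - 1)) := by
  have hne := transpose_ne_zero hodd
  have hps := psum_pMinus (zero_notMem_transpose p) hne
  have hklt : k < Multiset.card (transpose p) := by
    by_contra! hk
    have h := hps k
    rw [if_pos hk, psum_of_card_le _ hk, sum_transpose] at h
    obtain ⟨a, ha⟩ := hoddk
    obtain ⟨b, hb⟩ := hodd
    omega
  obtain ⟨m, rfl⟩ : ∃ m, k = 2 * m + 2 := by
    obtain ⟨r, hr⟩ := hk
    have : k ≠ 0 := fun h => by simp [h] at hoddk
    exact ⟨r - 1, by omega⟩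
  have h := hps (2 * m + 1)
  rw [if_neg (by omega), add_zero] at h
  rw [show 2 * m + 2 - 1 = 2 * m + 1 by omega, h]
  exact horth.odd_psum_transpose hp0 hodd m

lemma isSymplectic_transpose_explicitCollapse {p : Multiset ℕ} (hp0 : 0 ∉ p) (hodd : Odd p.sum)
    (horth : IsOrthogonal p) :
    IsSymplectic (transpose (explicitCollapse (pMinus (transpose p)))) := by
  have hev : Even (pMinus (transpose p)).sum := by
    have := sum_pMinus (zero_notMem_transpose p) (transpose_ne_zero hodd)
    rw [sum_transpose] at this
    obtain ⟨a, ha⟩ := hodd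
    exact ⟨a, by omega⟩
  exact isSymplectic_transpose_of_even_psum fun k hk => even_psum_explicitCollapse hev
    (fun _ hk hoddk => odd_psum_pMinus_transpose_pred hp0 hodd horth hk hoddk) hk

/-! The partition `[p₁ p₁ (2n*)]` -/

lemma exists_psum_qqm_le {q : Multiset ℕ} (h0 : 0 ∉ q) (m k : ℕ) :
    ∃ K e, K + e ≤ k ∧ e ≤ 1 ∧
      psum (qqm q m) k ≤ psum q ((K + 1) / 2) + psum q (K / 2) + e * m := by
  unfold qqm
  split_ifs with hm
  · exact ⟨k, 0, by omega, by omega, by simpa using psum_add_self_le h0 k⟩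
  · obtain ⟨a, b, hab, h⟩ := exists_psum_add_le (u := {m}) (w := q + q)
      (by simp [Ne.symm hm, h0]) k
    refine ⟨b, min a 1, by omega, by omega, ?_⟩
    rw [← Multiset.singleton_add]
    have := psum_singleton_le m a
    have := psum_add_self_le h0 b
    omega

lemma isSymplectic_qqm (q : Multiset ℕ) (m : ℕ) : IsSymplectic (qqm q (2 * m)) := by
  intro a ha
  unfold qqm
  split_ifs
  · exact ⟨q.count a, by rw [Multiset.count_add]⟩
  · have : a ≠ 2 * m := by rintro rfl; exact Nat.not_odd_iff_even.2 (even_two_mul m) ha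
    rw [Multiset.count_cons, if_neg this, Multiset.count_add, add_zero]
    exact ⟨q.count a, rfl⟩

lemma psum_pOne (p : Multiset ℕ) (j : ℕ) :
    psum (pOne p) j = (p.map (fun a => min (a / 2) j)).sum := by
  rw [pOne, psum_transpose, Multiset.map_map]
  rfl

lemma Multiset.sum_eq_two_mul_sum_div_two_add (p : Multiset ℕ) :
    p.sum = 2 * (p.map (· / 2)).sum + p.countP (Odd ·) := by
  induction p using Multiset.induction with
  | empty => simp
  | cons a u ih =>
    rw [Multiset.sum_cons, Multiset.map_cons, Multiset.sum_cons, Multiset.countP_cons, ih]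
    split_ifs with h <;> rw [Nat.odd_iff] at h <;> omega

lemma two_mul_nStar_add_one {p : Multiset ℕ} (hodd : Odd p.sum) :
    2 * nStar p + 1 = p.countP (Odd ·) := by
  rw [Nat.odd_iff, Multiset.sum_mod_two] at hodd
  rw [nStar]
  omega

lemma isPartitionOf_qqm_pOne {n : ℕ} {p : Multiset ℕ} (hp : IsPartitionOf (2 * n + 1) p) :
    IsPartitionOf (2 * n) (qqm (pOne p) (2 * nStar p)) := by
  have hodd : Odd p.sum := hp.1 ▸ odd_two_mul_add_one n
  have hsum := Multiset.sum_eq_two_mul_sum_div_two_add p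
  have hn := two_mul_nStar_add_one hodd
  have hpOne : (pOne p).sum = (p.map (· / 2)).sum := sum_transpose _
  have h0 : 0 ∉ pOne p := zero_notMem_transpose _
  have := hp.1
  unfold qqm
  split_ifs with hm
  · exact ⟨by rw [Multiset.sum_add, hpOne]; omega, by simpa using h0⟩
  · exact ⟨by rw [Multiset.sum_cons, Multiset.sum_add, hpOne]; omega,
      by simpa [Ne.symm hm] using h0⟩

/-- Each part `a` of `p` contributes at least as much to `Σ min a k` as to the left side. -/
lemma sum_min_div_two_add_le (p : Multiset ℕ) {j₁ j₂ e k : ℕ} (hk : j₁ + j₂ + e ≤ k) :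
    (p.map (fun a => min (a / 2) j₁)).sum + (p.map (fun a => min (a / 2) j₂)).sum
      + p.countP (fun a => Odd a ∧ a ≤ k) + e * colLen p k ≤ (p.map (fun a => min a k)).sum := by
  induction p using Multiset.induction with
  | empty => simp [colLen]
  | cons a u ih =>
    simp only [Multiset.map_cons, Multiset.sum_cons, Multiset.countP_cons, colLen] at ih ⊢
    rcases Nat.even_or_odd a with he | ho
    · simp only [Nat.not_odd_iff_even.2 he, false_and, if_false]
      obtain ⟨r, hr⟩ := he
      split_ifs <;> simp only [mul_add, mul_one, mul_zero] <;> omega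
    · simp only [ho, true_and]
      obtain ⟨r, hr⟩ := ho
      split_ifs <;> simp only [mul_add, mul_one, mul_zero] <;> omega

lemma countP_odd_le_add_colLen (p : Multiset ℕ) (k : ℕ) :
    p.countP (Odd ·) ≤ p.countP (fun a => Odd a ∧ a ≤ k) + colLen p k := by
  induction p using Multiset.induction with
  | empty => simp
  | cons a u ih =>
    simp only [Multiset.countP_cons, colLen] at ih ⊢
    by_cases ho : Odd a <;> simp only [ho, true_and, false_and, if_true, if_false] <;>
      split_ifs <;> omega

/-- Both sides are sums over the parts `a` of `p`: `psum (p^t) k = Σ min a k` and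
`psum p₁ j = Σ min (a / 2) j`. -/
lemma qqm_pOne_domLE_pMinus_transpose {n : ℕ} {p : Multiset ℕ} (hp : IsPartitionOf (2 * n + 1) p) :
    DomLE (qqm (pOne p) (2 * nStar p)) (pMinus (transpose p)) := by
  intro k
  have hodd : Odd p.sum := hp.1 ▸ odd_two_mul_add_one n
  have hne := transpose_ne_zero hodd
  obtain ⟨K, e, hKe, he, hx⟩ :=
    exists_psum_qqm_le (q := pOne p) (zero_notMem_transpose _) (2 * nStar p) k
  rw [psum_pOne, psum_pOne] at hx
  have hy := psum_pMinus (zero_notMem_transpose p) hne k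
  rw [psum_transpose, ← colLen_zero (zero_notMem_transpose p), colLen_transpose] at hy
  have hparts := sum_min_div_two_add_le p (j₁ := (K + 1) / 2) (j₂ := K / 2) (e := e) (k := k)
    (by omega)
  have hn := two_mul_nStar_add_one hodd
  have hcount := countP_odd_le_add_colLen p k
  split_ifs at hy with hmax
  · have hall : p.countP (fun a => Odd a ∧ a ≤ k) = p.countP (Odd ·) :=
      Multiset.countP_congr rfl fun a ha =>
        propext ⟨And.left, fun h => ⟨h, (le_rowLen_zero ha).trans hmax⟩⟩
    rcases Nat.le_one_iff_eq_zero_or_eq_one.1 he with rfl | rfl <;> omega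
  · have : 0 < colLen p k := (lt_colLen_iff p 0 k).2 (by omega)
    rcases Nat.le_one_iff_eq_zero_or_eq_one.1 he with rfl | rfl <;> omega

/-- Proposition 4.4, case `G_n = Sp_{2n}`: for an orthogonal partition `p`
of `2n+1`, `[p₁ p₁ (2n*)]^{Sp_{2n}} ≤ ((p^t)^-)_{Sp_{2n}}` in the dominance order. -/
theorem expansion_le_bv_dual_sp (n : ℕ) (p : Multiset ℕ)
    (hp : IsPartitionOf (2 * n + 1) p) (horth : IsOrthogonal p) :
    DomLE (sympExpansion (2 * n) (qqm (pOne p) (2 * nStar p)))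
      (sympCollapse (2 * n) (pMinus (transpose p))) := by
  have hodd : Odd p.sum := hp.1 ▸ odd_two_mul_add_one n
  have hy : (pMinus (transpose p)).sum = 2 * n := by
    have := sum_pMinus (zero_notMem_transpose p) (transpose_ne_zero hodd)
    rw [sum_transpose, hp.1] at this
    omega
  have hcoll := hy ▸ isCollapseOf_explicitCollapse (hy ▸ even_two_mul n)
  rw [sympCollapse, collapseOf_eq hcoll]
  obtain ⟨hcpart, hcsymp, -, hcmax⟩ := hcoll
  have hspecial : IsSpecialSymp (2 * n) (explicitCollapse (pMinus (transpose p))) :=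
    isSpecialSymp_of_isSymplectic_transpose hcpart hcsymp
      (isSymplectic_transpose_explicitCollapse hp.2 hodd horth)
  exact expansionOf_domLE hcpart hcsymp hspecial
    (hcmax _ (isPartitionOf_qqm_pOne hp) (isSymplectic_qqm _ _)
      (qqm_pOne_domLE_pMinus_transpose hp))
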